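/- Let Ω ⊆ ℝᵐ be open and convex, let U : Ω → ℝ be C³ and f^{Aj} : Ω → ℝ be C² (A = 1, …, m; j = 1, …, n). Set σ_{AB} := ∂²U/∂u^A ∂u^B, and suppose that for each j the matrix Σ_C σ_{AC} ∂f^{Cj}/∂u^B is symmetric in A and B at every point of Ω. Then for each j, the expression ∂/∂u^C [Σ_A (∂U/∂u^A)(∂f^{Aj}/∂u^B)] is symmetric in B and C at every point of Ω, and consequently there exist C¹ functions U¹, …, Uⁿ : Ω → ℝ such that Σ_A (∂U/∂u^A)(∂f^{Aj}/∂u^B) = ∂Uʲ/∂u^B on Ω. -/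

import Mathlib

/-- Partial derivative `∂g/∂u^A` of a function of the unknowns. -/
noncomputable def pd {m : ℕ} (g : (Fin m → ℝ) → ℝ) (A : Fin m) (v : Fin m → ℝ) : ℝ :=
  fderiv ℝ g v (Pi.single A 1)

/-- Second partial derivative `∂²g/∂u^A ∂u^B`. -/
noncomputable def pd2 {m : ℕ} (g : (Fin m → ℝ) → ℝ) (A B : Fin m) (v : Fin m → ℝ) : ℝ :=
  pd (fun w => pd g A w) B v

open Metric Set MeasureTheory intervalIntegral

noncomputable def dotE {m : ℕ} (x y : Fin m → ℝ) : ℝ := ∑ B, x B * y B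

noncomputable def dotCLM {m : ℕ} (x : Fin m → ℝ) : (Fin m → ℝ) →L[ℝ] ℝ :=
  ∑ B, x B • (ContinuousLinearMap.proj B : ((Fin m → ℝ)) →L[ℝ] ℝ)

@[simp] lemma dotCLM_apply {m : ℕ} (x y : Fin m → ℝ) : dotCLM x y = dotE x y := by
  simp [dotCLM, dotE, ContinuousLinearMap.sum_apply]

lemma dotE_comm {m : ℕ} (x y : Fin m → ℝ) : dotE x y = dotE y x := by
  simp [dotE, mul_comm]

lemma proj_norm_le_one {m : ℕ} (B : Fin m) :
    ‖(ContinuousLinearMap.proj B : ((Fin m → ℝ)) →L[ℝ] ℝ)‖ ≤ 1 :=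
  ContinuousLinearMap.opNorm_le_bound _ zero_le_one fun y => by
    simpa using norm_le_pi_norm y B

noncomputable def projR {m : ℕ} (B : Fin m) : (Fin m → ℝ) →L[ℝ] ℝ :=
  ContinuousLinearMap.proj B

@[simp] lemma projR_apply {m : ℕ} (B : Fin m) (x : Fin m → ℝ) : projR B x = x B := rfl

lemma projR_norm_le_one {m : ℕ} (B : Fin m) : ‖projR B‖ ≤ 1 := proj_norm_le_one B

lemma bound_aux {m : ℕ} (B : Fin m) (v : Fin m → ℝ)
    (D : (Fin m → ℝ) →L[ℝ] (Fin m → ℝ)) (s r M1 M2 R : ℝ)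
    (hv : ‖v‖ ≤ M1) (hD : ‖D‖ ≤ M2) (hs : |s| ≤ 1) (hr : |r| ≤ R) (hM2 : 0 ≤ M2) :
    ‖v B • projR B + r • ((projR B).comp
      (D.comp (s • ContinuousLinearMap.id ℝ (Fin m → ℝ))))‖ ≤ M1 + R * M2 := by
  have hM1 : (0:ℝ) ≤ M1 := le_trans (norm_nonneg v) hv
  have hR : (0:ℝ) ≤ R := le_trans (abs_nonneg r) hr
  apply ContinuousLinearMap.opNorm_le_bound _ (by positivity)
  intro w
  have happ : (v B • projR B + r • ((projR B).comp
      (D.comp (s • ContinuousLinearMap.id ℝ (Fin m → ℝ))))) w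
      = v B * w B + r * (D (s • w)) B := by
    simp [ContinuousLinearMap.add_apply, ContinuousLinearMap.smul_apply,
      ContinuousLinearMap.comp_apply]
  rw [happ]
  have hw : (0:ℝ) ≤ ‖w‖ := norm_nonneg w
  have h1 : |v B * w B| ≤ M1 * ‖w‖ := by
    rw [abs_mul]
    apply mul_le_mul (le_trans (norm_le_pi_norm v B) hv) (norm_le_pi_norm w B)
      (abs_nonneg _) hM1
  have hz : |(D (s • w)) B| ≤ M2 * ‖w‖ := by
    calc |(D (s • w)) B| = ‖(D (s • w)) B‖ := (Real.norm_eq_abs _).symm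
      _ ≤ ‖D (s • w)‖ := norm_le_pi_norm _ B
      _ ≤ ‖D‖ * ‖s • w‖ := D.le_opNorm _
      _ = ‖D‖ * (|s| * ‖w‖) := by rw [norm_smul, Real.norm_eq_abs]
      _ ≤ M2 * (1 * ‖w‖) := by
          apply mul_le_mul hD _ (by positivity) hM2
          exact mul_le_mul_of_nonneg_right hs hw
      _ = M2 * ‖w‖ := by ring
  have h2 : |r * (D (s • w)) B| ≤ R * (M2 * ‖w‖) := by
    rw [abs_mul]
    exact mul_le_mul hr hz (abs_nonneg _) hR
  calc ‖v B * w B + r * (D (s • w)) B‖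
      ≤ |v B * w B| + |r * (D (s • w)) B| := abs_add_le _ _
    _ ≤ M1 * ‖w‖ + R * (M2 * ‖w‖) := add_le_add h1 h2
    _ = (M1 + R * M2) * ‖w‖ := by ring

theorem poincare {m : ℕ} {Ω : Set (Fin m → ℝ)} (hΩ : IsOpen Ω) (hconv : Convex ℝ Ω)
    (V : (Fin m → ℝ) → (Fin m → ℝ)) (hV : ContDiffOn ℝ 1 V Ω)
    (hsym : ∀ q ∈ Ω, ∀ v w, dotE (fderiv ℝ V q v) w = dotE (fderiv ℝ V q w) v) :
    ∃ g : (Fin m → ℝ) → ℝ, ∀ p ∈ Ω, HasFDerivAt g (dotCLM (V p)) p := by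
  rcases Ω.eq_empty_or_nonempty with hE | ⟨c, hc⟩
  · exact ⟨0, fun p hp => by simp [hE] at hp⟩
  have hVd : ∀ x ∈ Ω, DifferentiableAt ℝ V x := fun x hx =>
    ((hV x hx).contDiffAt (hΩ.mem_nhds hx)).differentiableAt one_ne_zero
  have hVcont : ContinuousOn V Ω := hV.continuousOn
  have hDVcont : ContinuousOn (fderiv ℝ V) Ω := hV.continuousOn_fderiv_of_isOpen hΩ le_rfl
  -- the line integral
  set aff : (Fin m → ℝ) → ℝ → (Fin m → ℝ) := fun q t => c + t • (q - c) with haff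
  refine ⟨fun q => ∫ t in (0:ℝ)..1, dotE (V (aff q t)) (q - c), fun p hp => ?_⟩
  -- compact neighbourhood of the segment
  have hKc : IsCompact (segment ℝ c p) := by
    rw [segment_eq_image]
    exact isCompact_Icc.image (by continuity)
  have hKΩ : segment ℝ c p ⊆ Ω := hconv.segment_subset hc hp
  obtain ⟨ε, εpos, hεΩ⟩ := hKc.exists_cthickening_subset_open hΩ hKΩ
  set K' : Set (Fin m → ℝ) := cthickening ε (segment ℝ c p) with hK'def
  have hK'c : IsCompact K' := hKc.cthickening
  have hmem : ∀ q ∈ ball p ε, ∀ t ∈ Icc (0:ℝ) 1, aff q t ∈ K' := by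
    intro q hq t ht
    have hseg : aff p t ∈ segment ℝ c p := by
      refine ⟨1 - t, t, by linarith [ht.2], ht.1, by ring_nf, ?_⟩
      simp only [haff]
      module
    refine mem_cthickening_of_dist_le (aff q t) (aff p t) ε _ hseg ?_
    have : dist (aff q t) (aff p t) = ‖t • (q - p)‖ := by
      rw [dist_eq_norm]
      congr 1
      simp only [haff]
      module
    rw [this, norm_smul]
    calc |t| * ‖q - p‖ ≤ 1 * ‖q - p‖ := by
          apply mul_le_mul_of_nonneg_right _ (norm_nonneg _)
          rw [abs_le]; constructor <;> linarith [ht.1, ht.2]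
      _ ≤ ε := by
          rw [one_mul]
          have := mem_ball_iff_norm.1 hq
          linarith
  have hmemΩ : ∀ q ∈ ball p ε, ∀ t ∈ Icc (0:ℝ) 1, aff q t ∈ Ω :=
    fun q hq t ht => hεΩ (hmem q hq t ht)
  -- bounds on the compact set
  obtain ⟨M1, hM1⟩ := hK'c.exists_bound_of_continuousOn (hVcont.mono hεΩ)
  obtain ⟨M2, hM2⟩ := hK'c.exists_bound_of_continuousOn (hDVcont.mono hεΩ)
  set R : ℝ := ‖p - c‖ + ε with hRdef
  have hRq : ∀ q ∈ ball p ε, ‖q - c‖ ≤ R := by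
    intro q hq
    have h1 : q - c = (q - p) + (p - c) := by abel
    have h2 := mem_ball_iff_norm.1 hq
    calc ‖q - c‖ = ‖(q - p) + (p - c)‖ := by rw [h1]
      _ ≤ ‖q - p‖ + ‖p - c‖ := norm_add_le _ _
      _ ≤ R := by rw [hRdef]; linarith
  set F' : (Fin m → ℝ) → ℝ → ((Fin m → ℝ) →L[ℝ] ℝ) := fun q t =>
    ∑ B, ((V (aff q t) B) • projR B
      + (q B - c B) • ((projR B).comp
          ((fderiv ℝ V (aff q t)).comp (t • ContinuousLinearMap.id ℝ (Fin m → ℝ))))) with hF'def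
  -- differentiability of the integrand in q
  have hdiff : ∀ t ∈ Icc (0:ℝ) 1, ∀ q ∈ ball p ε,
      HasFDerivAt (fun q => dotE (V (aff q t)) (q - c)) (F' q t) q := by
    intro t ht q hq
    have hx : aff q t ∈ Ω := hmemΩ q hq t ht
    have h1 : HasFDerivAt (fun q => aff q t) (t • ContinuousLinearMap.id ℝ (Fin m → ℝ)) q :=
      (((hasFDerivAt_id q).sub_const c).const_smul t).const_add c
    have h3 : HasFDerivAt (fun q => V (aff q t))
        ((fderiv ℝ V (aff q t)).comp (t • ContinuousLinearMap.id ℝ (Fin m → ℝ))) q :=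
      ((hVd _ hx).hasFDerivAt).comp q h1
    have heq : (fun q => dotE (V (aff q t)) (q - c))
        = fun q => ∑ B, V (aff q t) B * (q B - c B) := by
      funext q; simp [dotE]
    rw [heq]
    apply HasFDerivAt.fun_sum
    intro B _
    have hcomp : HasFDerivAt (fun q => V (aff q t) B)
        ((projR B).comp
          ((fderiv ℝ V (aff q t)).comp (t • ContinuousLinearMap.id ℝ (Fin m → ℝ)))) q :=
      ((projR B).hasFDerivAt).comp q h3
    have hq' : HasFDerivAt (fun q : Fin m → ℝ => q B - c B) (projR B) q :=
      ((projR B).hasFDerivAt).sub_const (c B)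
    exact hcomp.mul hq'
  -- norm bound
  set bnd : ℝ := (m : ℝ) * (M1 + R * M2) with hbnddef
  have hbound : ∀ t ∈ Icc (0:ℝ) 1, ∀ q ∈ ball p ε, ‖F' q t‖ ≤ bnd := by
    intro t ht q hq
    have hxK : aff q t ∈ K' := hmem q hq t ht
    have hDVx : ‖fderiv ℝ V (aff q t)‖ ≤ M2 := hM2 _ hxK
    have hterm : ∀ B : Fin m,
        ‖(V (aff q t) B) • projR B + (q B - c B) • ((projR B).comp
          ((fderiv ℝ V (aff q t)).comp (t • ContinuousLinearMap.id ℝ (Fin m → ℝ))))‖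
          ≤ M1 + R * M2 := by
      intro B
      apply bound_aux B _ _ t _ M1 M2 R (hM1 _ hxK) hDVx
      · rw [abs_le]; exact ⟨by linarith [ht.1], ht.2⟩
      · calc |q B - c B| = ‖(q - c) B‖ := by simp [Real.norm_eq_abs]
          _ ≤ ‖q - c‖ := norm_le_pi_norm _ B
          _ ≤ R := hRq q hq
      · exact le_trans (norm_nonneg _) hDVx
    calc ‖F' q t‖ ≤ ∑ _B : Fin m, (M1 + R * M2) :=
          le_trans (norm_sum_le _ _) (Finset.sum_le_sum fun B _ => hterm B)
      _ = bnd := by rw [hbnddef]; simp [Finset.sum_const]; ring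
  -- continuity in t of the integrand, for q near p
  have haffc : ∀ q : Fin m → ℝ, Continuous (fun t => aff q t) := by
    intro q
    simp only [haff]
    exact continuous_const.add (continuous_id.smul continuous_const)
  have hcontt : ∀ q ∈ ball p ε, ContinuousOn (fun t => dotE (V (aff q t)) (q - c)) (Icc (0:ℝ) 1) := by
    intro q hq
    have hVa : ContinuousOn (fun t => V (aff q t)) (Icc (0:ℝ) 1) :=
      hVcont.comp (haffc q).continuousOn (fun t ht => hmemΩ q hq t ht)
    have : ContinuousOn (fun t => dotE (V (aff q t)) (q - c)) (Icc (0:ℝ) 1) := by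
      simp only [dotE]
      apply continuousOn_finset_sum
      intro B _
      exact ((continuous_apply B).comp_continuousOn hVa).mul continuousOn_const
    exact this
  -- continuity in t of F' p
  have hF'cont : ContinuousOn (fun t => F' p t) (Icc (0:ℝ) 1) := by
    have hballp : p ∈ ball p ε := mem_ball_self εpos
    have hVa : ContinuousOn (fun t => V (aff p t)) (Icc (0:ℝ) 1) :=
      hVcont.comp (haffc p).continuousOn (fun t ht => hmemΩ p hballp t ht)
    have hDVa : ContinuousOn (fun t => fderiv ℝ V (aff p t)) (Icc (0:ℝ) 1) :=
      hDVcont.comp (haffc p).continuousOn (fun t ht => hmemΩ p hballp t ht)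
    rw [hF'def]
    apply continuousOn_finset_sum
    intro B _
    apply ContinuousOn.add
    · exact ((continuous_apply B).comp_continuousOn hVa).smul continuousOn_const
    · apply ContinuousOn.fun_smul continuousOn_const
      apply ContinuousOn.clm_comp continuousOn_const
      apply ContinuousOn.clm_comp hDVa
      exact (continuous_id.smul continuous_const).continuousOn
  have hIsub : Set.uIoc (0:ℝ) 1 ⊆ Icc (0:ℝ) 1 := by
    rw [uIoc_of_le (zero_le_one)]
    exact Ioc_subset_Icc_self
  have hIcc : uIcc (0:ℝ) 1 = Icc (0:ℝ) 1 := uIcc_of_le zero_le_one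
  -- differentiate under the integral sign
  have key := intervalIntegral.hasFDerivAt_integral_of_dominated_of_fderiv_le
    (F := fun q t => dotE (V (aff q t)) (q - c)) (F' := F') (x₀ := p)
    (μ := MeasureTheory.volume) (a := 0) (b := 1) (bound := fun _ => bnd) (ball_mem_nhds p εpos)
    ?_ ?_ ?_ ?_ ?_ ?_
  rotate_left
  · filter_upwards [ball_mem_nhds p εpos] with q hq
    exact ((hcontt q hq).mono hIsub).aestronglyMeasurable measurableSet_uIoc
  · apply ContinuousOn.intervalIntegrable
    rw [hIcc]
    exact hcontt p (mem_ball_self εpos)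
  · exact ((hF'cont.mono hIsub)).aestronglyMeasurable measurableSet_uIoc
  · exact MeasureTheory.ae_of_all _ fun t ht q hq => hbound t (hIsub ht) q hq
  · exact intervalIntegrable_const
  · exact MeasureTheory.ae_of_all _ fun t ht q hq => hdiff t (hIsub ht) q hq
  -- identify the derivative
  have hInt : IntervalIntegrable (fun t => F' p t) MeasureTheory.volume 0 1 := by
    apply ContinuousOn.intervalIntegrable
    rw [hIcc]; exact hF'cont
  have hI : (∫ t in (0:ℝ)..1, F' p t) = dotCLM (V p) := by
    apply ContinuousLinearMap.ext
    intro w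
    rw [ContinuousLinearMap.intervalIntegral_apply hInt w, dotCLM_apply]
    -- the integrand is the derivative of ψ t = t * dotE (V (aff p t)) w
    have hψ : ∀ t ∈ uIcc (0:ℝ) 1,
        HasDerivAt (fun t => t * dotE (V (aff p t)) w) (F' p t w) t := by
      intro t ht
      rw [hIcc] at ht
      have hx : aff p t ∈ Ω := hmemΩ p (mem_ball_self εpos) t ht
      have haff' : HasDerivAt (fun t => aff p t) (p - c) t := by
        have h0 : HasDerivAt (fun t : ℝ => t • (p - c)) (p - c) t := by
          simpa using (hasDerivAt_id t).smul_const (p - c)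
        simpa only [haff] using h0.const_add c
      have hVt : HasDerivAt (fun t => V (aff p t)) (fderiv ℝ V (aff p t) (p - c)) t :=
        (hVd _ hx).hasFDerivAt.comp_hasDerivAt t haff'
      have hφ : HasDerivAt (fun t => dotE (V (aff p t)) w)
          (dotE (fderiv ℝ V (aff p t) (p - c)) w) t := by
        have heq : (fun t => dotE (V (aff p t)) w)
            = fun t => ∑ B, V (aff p t) B * w B := by funext t; simp [dotE]
        have heq2 : dotE (fderiv ℝ V (aff p t) (p - c)) w
            = ∑ B, (fderiv ℝ V (aff p t) (p - c)) B * w B := by simp [dotE]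
        rw [heq, heq2]
        apply HasDerivAt.fun_sum
        intro B _
        exact ((projR B).hasFDerivAt.comp_hasDerivAt t hVt).mul_const (w B)
      have hmul := (hasDerivAt_id t).mul hφ
      have hval : F' p t w = 1 * dotE (V (aff p t)) w
          + t * dotE (fderiv ℝ V (aff p t) (p - c)) w := by
        have hF'w : F' p t w = ∑ B, (V (aff p t) B * w B
            + (p B - c B) * (fderiv ℝ V (aff p t) (t • w)) B) := by
          rw [hF'def]
          simp [ContinuousLinearMap.sum_apply, ContinuousLinearMap.add_apply,
            ContinuousLinearMap.smul_apply, ContinuousLinearMap.comp_apply]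
        have hsmul : fderiv ℝ V (aff p t) (t • w) = t • fderiv ℝ V (aff p t) w :=
          (fderiv ℝ V (aff p t)).map_smul t w
        have hsym' : dotE (fderiv ℝ V (aff p t) w) (p - c)
            = dotE (fderiv ℝ V (aff p t) (p - c)) w := hsym _ hx w (p - c)
        rw [hF'w, Finset.sum_add_distrib]
        have e1 : ∑ B, V (aff p t) B * w B = dotE (V (aff p t)) w := by simp [dotE]
        have e2 : ∑ B, (p B - c B) * (fderiv ℝ V (aff p t) (t • w)) B
            = t * dotE (fderiv ℝ V (aff p t) (p - c)) w := by
          rw [hsmul, ← hsym']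
          simp only [dotE, Pi.smul_apply, smul_eq_mul, Finset.mul_sum]
          apply Finset.sum_congr rfl
          intro B _
          simp [Pi.sub_apply]
          ring
        rw [e1, e2]; ring
      rw [hval]
      exact hmul
    have hint2 : IntervalIntegrable (fun t => F' p t w) MeasureTheory.volume 0 1 := by
      apply ContinuousOn.intervalIntegrable
      rw [hIcc]
      exact hF'cont.clm_apply continuousOn_const
    have := intervalIntegral.integral_eq_sub_of_hasDerivAt hψ hint2
    rw [this]
    have haff1 : aff p 1 = p := by simp only [haff]; module
    simp [haff1]
  rw [hI] at key
  exact key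

lemma pd2_eq_sndFDeriv {m : ℕ} {g : (Fin m → ℝ) → ℝ} {p : Fin m → ℝ}
    (hg : ContDiffAt ℝ 2 g p) (A B : Fin m) :
    pd2 g A B p = fderiv ℝ (fderiv ℝ g) p (Pi.single B 1) (Pi.single A 1) := by
  have hd : DifferentiableAt ℝ (fderiv ℝ g) p :=
    (hg.fderiv_right (m := 1) (by norm_num)).differentiableAt one_ne_zero
  have hc : HasFDerivAt (fun w => fderiv ℝ g w (Pi.single A 1))
      (((ContinuousLinearMap.apply ℝ ℝ (Pi.single A 1) :
          ((Fin m → ℝ) →L[ℝ] ℝ) →L[ℝ] ℝ)).comp (fderiv ℝ (fderiv ℝ g) p)) p :=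
    ((ContinuousLinearMap.apply ℝ ℝ (Pi.single A 1) :
      ((Fin m → ℝ) →L[ℝ] ℝ) →L[ℝ] ℝ)).hasFDerivAt.comp p hd.hasFDerivAt
  show fderiv ℝ (fun w => fderiv ℝ g w (Pi.single A 1)) p (Pi.single B 1) = _
  rw [hc.fderiv]
  rfl

lemma pd2_symm {m : ℕ} {g : (Fin m → ℝ) → ℝ} {p : Fin m → ℝ}
    (hg : ContDiffAt ℝ 2 g p) (A B : Fin m) : pd2 g A B p = pd2 g B A p := by
  rw [pd2_eq_sndFDeriv hg A B, pd2_eq_sndFDeriv hg B A]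
  exact hg.isSymmSndFDerivAt (by simp) _ _

/-- **A symmetrizing Hessian produces an entropy pair.**
If the Hessian `σ` of `U` symmetrizes the fluxes on an open convex `Ω`, then
the field `B ↦ Σ_A (∂U/∂u^A)(∂f^{Aj}/∂u^B)` has symmetric derivative, and hence
there exist `Uʲ` with `Σ_A (∂U/∂u^A)(∂f^{Aj}/∂u^B) = ∂Uʲ/∂u^B` on `Ω`. -/
theorem stmt8 {m n : ℕ}
    (Ω : Set (Fin m → ℝ)) (hΩ : IsOpen Ω) (hconv : Convex ℝ Ω)
    (U : (Fin m → ℝ) → ℝ) (F : Fin m → Fin n → (Fin m → ℝ) → ℝ)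
    (hU : ContDiffOn ℝ 3 U Ω) (hF : ∀ A j, ContDiffOn ℝ 2 (F A j) Ω)
    (hsymm : ∀ p ∈ Ω, ∀ (j : Fin n) (A B : Fin m),
      ∑ C, pd2 U A C p * pd (F C j) B p = ∑ C, pd2 U B C p * pd (F C j) A p) :
    (∀ p ∈ Ω, ∀ (j : Fin n) (B C : Fin m),
      pd (fun q => ∑ A, pd U A q * pd (F A j) B q) C p
        = pd (fun q => ∑ A, pd U A q * pd (F A j) C q) B p)
    ∧ ∃ Uj : Fin n → (Fin m → ℝ) → ℝ,
        (∀ j, ContDiffOn ℝ 1 (Uj j) Ω) ∧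
        ∀ p ∈ Ω, ∀ (j : Fin n) (B : Fin m),
          ∑ A, pd U A p * pd (F A j) B p = pd (Uj j) B p := by
  -- regularity of the first partials
  have hDU : ContDiffOn ℝ 2 (fderiv ℝ U) Ω := by
    have h3 : ContDiffOn ℝ ((2 : ℕ) + 1) U Ω := by exact_mod_cast hU
    exact ((contDiffOn_succ_iff_fderiv_of_isOpen hΩ).1 h3).2.2
  have hUA : ∀ A : Fin m, ContDiffOn ℝ 2 (fun q => pd U A q) Ω := fun A =>
    (ContinuousLinearMap.apply ℝ ℝ (Pi.single A 1) :
      ((Fin m → ℝ) →L[ℝ] ℝ) →L[ℝ] ℝ).contDiff.comp_contDiffOn hDU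
  have hDF : ∀ A j, ContDiffOn ℝ 1 (fderiv ℝ (F A j)) Ω := by
    intro A j
    have h2 : ContDiffOn ℝ ((1 : ℕ) + 1) (F A j) Ω := by exact_mod_cast hF A j
    exact ((contDiffOn_succ_iff_fderiv_of_isOpen hΩ).1 h2).2.2
  have hFb : ∀ A j (B : Fin m), ContDiffOn ℝ 1 (fun q => pd (F A j) B q) Ω := fun A j B =>
    (ContinuousLinearMap.apply ℝ ℝ (Pi.single B 1) :
      ((Fin m → ℝ) →L[ℝ] ℝ) →L[ℝ] ℝ).contDiff.comp_contDiffOn (hDF A j)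
  have hWB : ∀ j (B : Fin m), ContDiffOn ℝ 1 (fun q => ∑ A, pd U A q * pd (F A j) B q) Ω :=
    fun j B => ContDiffOn.sum fun A _ =>
      ((hUA A).of_le (by norm_num)).mul (hFb A j B)
  have hW : ∀ j, ContDiffOn ℝ 1 (fun q (B : Fin m) => ∑ A, pd U A q * pd (F A j) B q) Ω :=
    fun j => contDiffOn_pi.2 fun B => hWB j B
  -- derivative of the components of W
  have hWBder : ∀ p, p ∈ Ω → ∀ j (B : Fin m),
      HasFDerivAt (fun q => ∑ A, pd U A q * pd (F A j) B q)
        (∑ A, (pd U A p • fderiv ℝ (fun q => pd (F A j) B q) p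
          + pd (F A j) B p • fderiv ℝ (fun q => pd U A q) p)) p := by
    intro p hp j B
    apply HasFDerivAt.fun_sum
    intro A _
    have h1 : HasFDerivAt (fun q => pd U A q) (fderiv ℝ (fun q => pd U A q) p) p :=
      ((((hUA A) p hp).contDiffAt (hΩ.mem_nhds hp)).differentiableAt
        (by norm_num)).hasFDerivAt
    have h2 : HasFDerivAt (fun q => pd (F A j) B q)
        (fderiv ℝ (fun q => pd (F A j) B q) p) p :=
      ((((hFb A j B) p hp).contDiffAt (hΩ.mem_nhds hp)).differentiableAt
        (by norm_num)).hasFDerivAt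
    exact h1.mul h2
  -- the partial derivatives of the components of W
  have hpdW : ∀ p, p ∈ Ω → ∀ j (B C : Fin m),
      pd (fun q => ∑ A, pd U A q * pd (F A j) B q) C p
        = ∑ A, (pd U A p * pd2 (F A j) B C p + pd (F A j) B p * pd2 U A C p) := by
    intro p hp j B C
    show fderiv ℝ (fun q => ∑ A, pd U A q * pd (F A j) B q) p (Pi.single C 1) = _
    rw [(hWBder p hp j B).fderiv, ContinuousLinearMap.sum_apply]
    apply Finset.sum_congr rfl
    intro A _
    rfl
  -- part 1 : symmetry
  have part1 : ∀ p ∈ Ω, ∀ (j : Fin n) (B C : Fin m),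
      pd (fun q => ∑ A, pd U A q * pd (F A j) B q) C p
        = pd (fun q => ∑ A, pd U A q * pd (F A j) C q) B p := by
    intro p hp j B C
    rw [hpdW p hp j B C, hpdW p hp j C B]
    have hFA2 : ∀ A, ContDiffAt ℝ 2 (F A j) p := fun A =>
      ((hF A j) p hp).contDiffAt (hΩ.mem_nhds hp)
    have hU2 : ContDiffAt ℝ 2 U p :=
      (((hU) p hp).contDiffAt (hΩ.mem_nhds hp)).of_le (by norm_num)
    rw [Finset.sum_add_distrib, Finset.sum_add_distrib]
    congr 1
    · exact Finset.sum_congr rfl fun A _ => by rw [pd2_symm (hFA2 A) B C]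
    · calc ∑ A, pd (F A j) B p * pd2 U A C p
          = ∑ A, pd2 U C A p * pd (F A j) B p := by
            exact Finset.sum_congr rfl fun A _ => by rw [pd2_symm hU2 A C, mul_comm]
        _ = ∑ A, pd2 U B A p * pd (F A j) C p := hsymm p hp j C B
        _ = ∑ A, pd (F A j) C p * pd2 U A B p := by
            exact Finset.sum_congr rfl fun A _ => by rw [pd2_symm hU2 B A, mul_comm]
  refine ⟨part1, ?_⟩
  -- the vector field
  set V : Fin n → (Fin m → ℝ) → (Fin m → ℝ) :=
    fun j q B => ∑ A, pd U A q * pd (F A j) B q with hVdef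
  have hVdiffAt : ∀ j, ∀ p ∈ Ω, DifferentiableAt ℝ (V j) p := fun j p hp =>
    (((hW j) p hp).contDiffAt (hΩ.mem_nhds hp)).differentiableAt one_ne_zero
  have hcompder : ∀ j, ∀ p ∈ Ω, ∀ (v : Fin m → ℝ) (B : Fin m),
      fderiv ℝ (V j) p v B = fderiv ℝ (fun q => V j q B) p v := by
    intro j p hp v B
    have h : HasFDerivAt (fun q => V j q B) ((projR B).comp (fderiv ℝ (V j) p)) p :=
      (projR B).hasFDerivAt.comp p (hVdiffAt j p hp).hasFDerivAt
    rw [h.fderiv]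
    rfl
  have hbasis : ∀ j, ∀ p ∈ Ω, ∀ B C : Fin m,
      fderiv ℝ (V j) p (Pi.single C 1) B = fderiv ℝ (V j) p (Pi.single B 1) C := by
    intro j p hp B C
    rw [hcompder j p hp _ B, hcompder j p hp _ C]
    exact part1 p hp j B C
  have hdotsym : ∀ j, ∀ p ∈ Ω, ∀ v w : Fin m → ℝ,
      dotE (fderiv ℝ (V j) p v) w = dotE (fderiv ℝ (V j) p w) v := by
    intro j p hp v w
    have expand : ∀ u : Fin m → ℝ,
        fderiv ℝ (V j) p u = ∑ C, u C • fderiv ℝ (V j) p (Pi.single C 1) := by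
      intro u
      have hu : u = ∑ C, u C • (Pi.single C 1 : Fin m → ℝ) := by
        funext x
        simp [Pi.single_apply]
      conv_lhs => rw [hu]
      rw [map_sum]
      exact Finset.sum_congr rfl fun C _ => (fderiv ℝ (V j) p).map_smul _ _
    rw [expand v, expand w]
    simp only [dotE, Finset.sum_apply, Pi.smul_apply, smul_eq_mul,
      Finset.sum_mul, Finset.mul_sum]
    rw [Finset.sum_comm]
    apply Finset.sum_congr rfl
    intro B _
    apply Finset.sum_congr rfl
    intro C _
    rw [hbasis j p hp B C]
    ring
  have hex : ∀ j, ∃ g : (Fin m → ℝ) → ℝ, ∀ p ∈ Ω, HasFDerivAt g (dotCLM (V j p)) p :=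
    fun j => poincare hΩ hconv (V j) (hW j) (hdotsym j)
  choose Uj hUj using hex
  refine ⟨Uj, ?_, ?_⟩
  · intro j
    rw [show (1 : WithTop ℕ∞) = (0 : ℕ) + 1 by norm_num,
      contDiffOn_succ_iff_fderiv_of_isOpen hΩ]
    refine ⟨fun p hp => (hUj j p hp).differentiableAt.differentiableWithinAt, ?_, ?_⟩
    · intro h
      exact absurd h (by norm_num)
    · simp only [Nat.cast_zero]
      rw [contDiffOn_zero]
      apply ContinuousOn.congr (f := fun q => dotCLM (V j q))
      · apply continuousOn_finset_sum
        intro B _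
        apply ContinuousOn.fun_smul _ continuousOn_const
        exact (continuous_apply B).comp_continuousOn (hW j).continuousOn
      · intro q hq
        exact (hUj j q hq).fderiv
  · intro p hp j B
    show ∑ A, pd U A p * pd (F A j) B p = fderiv ℝ (Uj j) p (Pi.single B 1)
    rw [(hUj j p hp).fderiv, dotCLM_apply]
    simp only [dotE, Pi.single_apply, mul_ite, mul_one, mul_zero]
    rw [Finset.sum_ite_eq' Finset.univ B (fun C => V j p C)]
    simp [hVdef]
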